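/- Let H be a finite simple graph with no isolated vertices. The edge polytope P(H) is a simplex if and only if every cycle in H is odd and every connected component of H contains at most one cycle. -/

import Mathlib

/-!
The points `e i + e j` all lie on the hyperplane `∑ k, x k = 2`, which misses the origin, so they
are affinely independent iff they are linearly independent. An even cycle, or two different odd
cycles in one component together with a path joining them, carries a nonzero linear relation with
alternating coefficients. Conversely, the edges on which a relation is nonzero form a subgraph
without vertices of degree one, hence containing a cycle, and in a pseudoforest such a cycle
carries every edge at its vertices. Pairing the relation with alternating vertex weights along that
cycle, which is odd, shows that the coefficient of its closing edge vanishes.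
-/

open Set

/-- The set of generating points `e i + e j` for the edges `{i, j}` of a graph on
`Fin n`; these are exactly the vertices of the edge polytope. -/
def edgeVectors {n : ℕ} (H : SimpleGraph (Fin n)) : Set (Fin n → ℝ) :=
  {x | ∃ i j : Fin n, H.Adj i j ∧ x = Pi.single i 1 + Pi.single j 1}

/-- Every cycle of `H` is odd, and every connected component of `H` contains at most
one cycle (any two cycles lying in the same component have the same edge set). -/
def CactusLike {V : Type*} (H : SimpleGraph V) : Prop :=
  (∀ (v : V) (c : H.Walk v v), c.IsCycle → Odd c.length) ∧
  (∀ (u v : V) (c : H.Walk u u) (d : H.Walk v v), c.IsCycle → d.IsCycle →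
    H.Reachable u v → ∀ e : Sym2 V, e ∈ c.edges ↔ e ∈ d.edges)

open Matrix SimpleGraph

section LinearAlgebra

variable {K V ι : Type*} [Field K] [AddCommGroup V] [Module K V]

theorem affineIndependent_iff_linearIndependent_of_forall_apply_eq {p : ι → V} (f : V →ₗ[K] K)
    {c : K} (hc : c ≠ 0) (hf : ∀ i, f (p i) = c) :
    AffineIndependent K p ↔ LinearIndependent K p := by
  refine ⟨fun hp ↦ linearIndependent_iff'.mpr fun s w hw ↦ ?_,
    LinearIndependent.affineIndependent K⟩
  refine hp.eq_zero_of_sum_eq_zero ?_ hw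
  have := congrArg f hw
  simp only [map_sum, map_smul, hf, smul_eq_mul, map_zero, ← Finset.sum_mul] at this
  exact (mul_eq_zero.mp this).resolve_right hc

theorem linearIndepOn_iff_of_fintype [Fintype ι] {v : ι → V} {s : Set ι} :
    LinearIndepOn K v s ↔ ∀ g : ι → K, (∀ i ∉ s, g i = 0) → ∑ i, g i • v i = 0 → g = 0 := by
  classical
  rw [linearIndepOn_iff'']
  refine ⟨fun h g hgs hsum ↦ funext fun i ↦ ?_, fun h t g hts hgt hsum i _ ↦ ?_⟩
  · by_cases hi : i ∈ s
    · refine h s.toFinset g (by simp) (fun j hj ↦ hgs j (by simpa using hj)) ?_ i (by simpa)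
      rwa [Finset.sum_subset (Finset.subset_univ _) fun j _ hj ↦ by
        rw [hgs j (by simpa using hj), zero_smul]]
    · exact hgs i hi
  · refine congrFun (h g (fun j hj ↦ hgt j fun hjt ↦ hj (hts hjt)) ?_) i
    rwa [← Finset.sum_subset (Finset.subset_univ t) fun j _ hj ↦ by rw [hgt j hj, zero_smul]]

end LinearAlgebra

namespace Sym2

variable {V : Type*} [DecidableEq V] (K : Type*) [Field K]

def incidenceVector (e : Sym2 V) : V → K := fun v ↦ if v ∈ e then 1 else 0

variable {K}

theorem incidenceVector_mk {a b : V} (hab : a ≠ b) :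
    s(a, b).incidenceVector K = Pi.single a 1 + Pi.single b 1 := by
  ext v
  by_cases hva : v = a <;> by_cases hvb : v = b <;> simp_all [incidenceVector]

theorem incidenceVector_injective : Function.Injective (incidenceVector K : Sym2 V → V → K) :=
  fun e e' h ↦ Sym2.ext fun v ↦ by
    have := congrFun h v
    by_cases hv : v ∈ e <;> by_cases hv' : v ∈ e' <;> simp_all [incidenceVector]

theorem dotProduct_incidenceVector_mk [Fintype V] (f : V → K) {a b : V} (hab : a ≠ b) :
    f ⬝ᵥ s(a, b).incidenceVector K = f a + f b := by
  simp [incidenceVector_mk hab, dotProduct_add, dotProduct_single]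

theorem dotProduct_incidenceVector_eq_zero [Fintype V] {f : V → K} {e : Sym2 V}
    (hf : ∀ v ∈ e, f v = 0) : f ⬝ᵥ e.incidenceVector K = 0 :=
  Finset.sum_eq_zero fun v _ ↦ by by_cases hv : v ∈ e <;> simp [incidenceVector, hv, hf]

theorem sum_smul_incidenceVector_apply [Fintype V] (g : Sym2 V → K) (v : V) :
    (∑ e, g e • e.incidenceVector K) v = ∑ e, if v ∈ e then g e else 0 := by
  simp [Finset.sum_apply, incidenceVector]

end Sym2

namespace SimpleGraph.Walk

variable {V : Type*} [DecidableEq V] {G : SimpleGraph V} (K : Type*) [Field K]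

-- `(-1) ^ i` on the `i`-th edge, resp. vertex, of the walk, added up over repetitions.
def altEdgeWeight : {u v : V} → G.Walk u v → Sym2 V → K
  | _, _, nil => 0
  | u, _, cons (v := w) _ p => Pi.single s(u, w) 1 - p.altEdgeWeight

def altVertexWeight : {u v : V} → G.Walk u v → V → K
  | u, _, nil => Pi.single u 1
  | u, _, cons _ p => Pi.single u 1 - p.altVertexWeight

variable {K} {u v : V}

theorem altEdgeWeight_eq_zero {p : G.Walk u v} {e : Sym2 V} (he : e ∉ p.edges) :
    p.altEdgeWeight K e = 0 := by
  induction p with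
  | nil => rfl
  | cons h q ih =>
    simp only [edges_cons, List.mem_cons, not_or] at he
    simp [altEdgeWeight, he.1, ih he.2]

theorem IsTrail.altEdgeWeight_eq_one_or_eq_neg_one {p : G.Walk u v} (hp : p.IsTrail)
    {e : Sym2 V} (he : e ∈ p.edges) : p.altEdgeWeight K e = 1 ∨ p.altEdgeWeight K e = -1 := by
  induction p with
  | nil => simp at he
  | cons h q ih =>
    rw [isTrail_cons] at hp
    rw [edges_cons, List.mem_cons] at he
    rcases he with rfl | he
    · simp [altEdgeWeight, altEdgeWeight_eq_zero hp.2]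
    · have hne : e ≠ s(_, _) := fun h ↦ hp.2 (h ▸ he)
      rcases ih hp.1 he with h1 | h1 <;> simp [altEdgeWeight, hne, h1]

theorem altVertexWeight_eq_zero {p : G.Walk u v} {x : V} (hx : x ∉ p.support) :
    p.altVertexWeight K x = 0 := by
  induction p with
  | nil => simp_all [altVertexWeight]
  | cons h q ih =>
    simp only [support_cons, List.mem_cons, not_or] at hx
    simp [altVertexWeight, hx.1, ih hx.2]

theorem IsPath.altVertexWeight_start {p : G.Walk u v} (hp : p.IsPath) :
    p.altVertexWeight K u = 1 := by
  cases p with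
  | nil => simp [altVertexWeight]
  | cons h q => simp [altVertexWeight, altVertexWeight_eq_zero ((cons_isPath_iff h q).mp hp).2]

theorem IsPath.altVertexWeight_end {p : G.Walk u v} (hp : p.IsPath) :
    p.altVertexWeight K v = (-1) ^ p.length := by
  induction p with
  | nil => simp [altVertexWeight]
  | @cons u _ w h q ih =>
    obtain ⟨hq, hu⟩ := (cons_isPath_iff h q).mp hp
    have hne : w ≠ u := fun h ↦ hu (h ▸ q.end_mem_support)
    simp [altVertexWeight, hne, ih hq, pow_succ]

theorem IsPath.altVertexWeight_add_eq_zero {p : G.Walk u v} (hp : p.IsPath) {a b : V}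
    (hab : s(a, b) ∈ p.edges) : p.altVertexWeight K a + p.altVertexWeight K b = 0 := by
  induction p with
  | nil => simp at hab
  | @cons u m _ h q ih =>
    obtain ⟨hq, hu⟩ := (cons_isPath_iff h q).mp hp
    rw [edges_cons, List.mem_cons] at hab
    rcases hab with hab | hab
    · have key : (cons h q).altVertexWeight K u + (cons h q).altVertexWeight K m = 0 := by
        simp [altVertexWeight, h.ne.symm, altVertexWeight_eq_zero hu,
          hq.altVertexWeight_start]
      rcases Sym2.eq_iff.mp hab with ⟨rfl, rfl⟩ | ⟨rfl, rfl⟩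
      · exact key
      · rwa [add_comm]
    · have ha : a ≠ u := fun h ↦ hu (h ▸ q.fst_mem_support_of_mem_edges hab)
      have hb : b ≠ u := fun h ↦ hu (h ▸ q.snd_mem_support_of_mem_edges hab)
      simp [altVertexWeight, ha, hb, ← neg_add, ih hq hab]

variable [Fintype V]

theorem sum_altEdgeWeight_smul_incidenceVector (p : G.Walk u v) :
    ∑ e, p.altEdgeWeight K e • e.incidenceVector K =
      Pi.single u 1 - ((-1) ^ p.length : K) • Pi.single v 1 := by
  induction p with
  | nil => simp [altEdgeWeight]
  | cons h q ih =>
    simp only [altEdgeWeight, Pi.sub_apply, sub_smul, Finset.sum_sub_distrib, ih,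
      Pi.single_apply, ite_smul, one_smul, zero_smul, Finset.sum_ite_eq', Finset.mem_univ,
      if_true, Sym2.incidenceVector_mk h.ne, length_cons, pow_succ]
    module

end SimpleGraph.Walk

namespace SimpleGraph

variable {V : Type*} {G : SimpleGraph V}

def IsPseudoforest (G : SimpleGraph V) : Prop :=
  ∀ ⦃u v : V⦄ (c : G.Walk u u) (d : G.Walk v v), c.IsCycle → d.IsCycle → G.Reachable u v →
    ∀ e : Sym2 V, e ∈ c.edges ↔ e ∈ d.edges

theorem CactusLike.anti {H : SimpleGraph V} (hle : G ≤ H) (hH : CactusLike H) : CactusLike G := by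
  refine ⟨fun v c hc ↦ ?_, fun u v c d hc hd huv e ↦ ?_⟩
  · simpa using hH.1 v (c.mapLe hle) (hc.mapLe hle)
  · simpa using hH.2 u v (c.mapLe hle) (d.mapLe hle) (hc.mapLe hle) (hd.mapLe hle) (huv.mono hle) e

theorem Walk.IsPath.exists_append_forall_adj_mem_support [Fintype V] {a b : V} {p : G.Walk a b}
    (hp : p.IsPath) : ∃ (c : V) (q : G.Walk b c), (p.append q).IsPath ∧
      ∀ z, G.Adj c z → z ∈ (p.append q).support := by
  by_cases hmax : ∀ z, G.Adj b z → z ∈ p.support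
  · exact ⟨b, .nil, by simpa using hp, by simpa using hmax⟩
  push Not at hmax
  obtain ⟨z, hbz, hz⟩ := hmax
  have := (hp.concat hz hbz).length_lt
  obtain ⟨c, q, hq, hmax⟩ := (hp.concat hz hbz).exists_append_forall_adj_mem_support
  rw [Walk.concat_append] at hq hmax
  exact ⟨c, .cons hbz q, hq, hmax⟩
termination_by Fintype.card V - p.length
decreasing_by simp only [Walk.length_concat] at this ⊢; omega

theorem Walk.IsPath.exists_isCycle_of_forall_adj_mem_support
    (hdeg : ∀ v y, G.Adj v y → ∃ z, G.Adj v z ∧ z ≠ y) {b w : V} {p : G.Walk b w}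
    (hp : p.IsPath) (hbw : b ≠ w) (hmax : ∀ z, G.Adj b z → z ∈ p.support) :
    ∃ c : G.Walk b b, c.IsCycle := by
  classical
  obtain ⟨y, hby, q, rfl⟩ := Walk.exists_eq_cons_of_ne hbw p
  obtain ⟨z, hbz, hzy⟩ := hdeg b y hby
  have hbq : b ∉ q.support := ((Walk.cons_isPath_iff hby q).mp hp).2
  have hbz_edges : s(b, z) ∉ (Walk.cons hby q).edges := by
    rw [Walk.edges_cons, List.mem_cons, not_or]
    exact ⟨fun h ↦ hzy (Sym2.congr_right.mp h), fun h ↦ hbq (q.fst_mem_support_of_mem_edges h)⟩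
  have hz := hmax z hbz
  refine ⟨.cons hbz ((Walk.cons hby q).takeUntil z hz).reverse, ?_⟩
  rw [Walk.cons_isCycle_iff, Walk.edges_reverse, List.mem_reverse]
  exact ⟨(hp.takeUntil hz).reverse,
    fun h ↦ hbz_edges (Walk.edges_takeUntil_subset_edges _ hz h)⟩

theorem exists_isCycle_of_adj [Fintype V] (hdeg : ∀ v y, G.Adj v y → ∃ z, G.Adj v z ∧ z ≠ y)
    {a b : V} (hab : G.Adj a b) : ∃ (c : V) (d : G.Walk c c), d.IsCycle := by
  obtain ⟨c, q, hq, hmax⟩ := (Walk.IsPath.of_adj hab).exists_append_forall_adj_mem_support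
  have hac : c ≠ a := fun h ↦ ((Walk.cons_isPath_iff hab q).mp (by simpa using hq)).2
    (h ▸ q.end_mem_support)
  exact ⟨c, hq.reverse.exists_isCycle_of_forall_adj_mem_support hdeg hac
    fun z hz ↦ by rw [Walk.support_reverse, List.mem_reverse]; exact hmax z hz⟩

theorem IsPseudoforest.mem_edges_of_isCycle [Fintype V] (hG : G.IsPseudoforest)
    (hdeg : ∀ v y, G.Adj v y → ∃ z, G.Adj v z ∧ z ≠ y) {u : V} {c : G.Walk u u}
    (hc : c.IsCycle) {v y : V} (hv : v ∈ c.support) (hvy : G.Adj v y) : s(v, y) ∈ c.edges := by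
  classical
  by_contra hvyc
  -- Extend `s(v, y)` to a maximal path. If it comes back to `c`, then `s(v, y)` is not a bridge and
  -- lies on a second cycle through `v`; otherwise it ends in a cycle that leaves `c`.
  obtain ⟨b, q, hpath, hmax⟩ := (Walk.IsPath.of_adj hvy).exists_append_forall_adj_mem_support
  simp only [Adj.toWalk, Walk.cons_append, Walk.nil_append] at hpath hmax
  have hvq : v ∉ q.support := ((Walk.cons_isPath_iff hvy q).mp hpath).2
  have huv : G.Reachable u v := ⟨c.takeUntil v hv⟩
  by_cases hb : b ∈ c.support
  · let r : G.Walk y v := q.append ((c.dropUntil b hb).append (c.takeUntil v hv))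
    have hr : s(v, y) ∉ r.edges := by
      simp only [r, Walk.edges_append, List.mem_append, not_or]
      exact ⟨fun h ↦ hvq (q.fst_mem_support_of_mem_edges h),
        fun h ↦ hvyc (Walk.edges_dropUntil_subset_edges c hb h),
        fun h ↦ hvyc (Walk.edges_takeUntil_subset_edges c hv h)⟩
    obtain ⟨w, d, hd, hvyd⟩ := adj_and_reachable_delete_edges_iff_exists_cycle.mp
      ⟨hvy, (r.toDeleteEdge _ hr).reachable.symm⟩
    have hvw : G.Reachable v w := ⟨(d.dropUntil v (d.fst_mem_support_of_mem_edges hvyd))⟩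
    exact hvyc ((hG c d hc hd (huv.trans hvw) _).mpr hvyd)
  · obtain ⟨d, hd⟩ := (hpath.reverse).exists_isCycle_of_forall_adj_mem_support hdeg
      (fun h ↦ hvq (h ▸ q.end_mem_support))
      fun z hz ↦ by rw [Walk.support_reverse, List.mem_reverse]; exact hmax z hz
    cases d with
    | nil => exact hd.ne_nil rfl
    | @cons _ z _ hbz t =>
      have := (hG c _ hc hd (huv.trans ⟨.cons hvy q⟩) s(b, z)).mpr (by simp)
      exact hb (c.fst_mem_support_of_mem_edges this)

end SimpleGraph

section IncidenceRelations

variable {V : Type*} [Fintype V] [DecidableEq V] {K : Type*} [Field K] {G : SimpleGraph V}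
  {g : Sym2 V → K}

theorem exists_ne_mem_of_sum_smul_incidenceVector_eq_zero
    (hg : ∑ e, g e • e.incidenceVector K = 0) {v : V} {e₀ : Sym2 V} (hv : v ∈ e₀)
    (he₀ : g e₀ ≠ 0) : ∃ e ≠ e₀, v ∈ e ∧ g e ≠ 0 := by
  by_contra! h
  have := congrFun hg v
  rw [Sym2.sum_smul_incidenceVector_apply, Finset.sum_eq_single e₀ (fun e _ he ↦ by
    by_cases hve : v ∈ e <;> simp [hve, h e he]) (by simp), if_pos hv] at this
  exact he₀ this

theorem apply_eq_zero_of_isCycle_of_odd [CharZero K] (hg : ∑ e, g e • e.incidenceVector K = 0)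
    {u x : V} {h : G.Adj u x} {t : G.Walk x u} (hc : (Walk.cons h t).IsCycle)
    (hodd : Odd (Walk.cons h t).length)
    (hclosed : ∀ e, g e ≠ 0 → ∀ v ∈ e, v ∈ t.support → e ∈ (Walk.cons h t).edges) :
    g s(u, x) = 0 := by
  obtain ⟨ht, hux⟩ := (Walk.cons_isCycle_iff t h).mp hc
  rw [Walk.length_cons, Nat.odd_add_one, Nat.not_odd_iff_even] at hodd
  -- Paired with `t.altVertexWeight K`, the edges of `t` give `0`, the closing edge `s(u, x)`
  -- gives `2`, and the remaining edges of the support do not meet `t`.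
  have hpair : ∀ e, g e * (t.altVertexWeight K ⬝ᵥ e.incidenceVector K) =
      if e = s(u, x) then 2 * g e else 0 := by
    intro e
    split_ifs with he
    · rw [he, Sym2.dotProduct_incidenceVector_mk _ h.ne, ht.altVertexWeight_end,
        hodd.neg_one_pow, ht.altVertexWeight_start]
      ring
    by_cases hge : g e = 0
    · rw [hge, zero_mul]
    by_cases het : e ∈ t.edges
    · induction e with
      | _ a b =>
        rw [Sym2.dotProduct_incidenceVector_mk _ (t.adj_of_mem_edges het).ne,
          ht.altVertexWeight_add_eq_zero het, mul_zero]
    · rw [Sym2.dotProduct_incidenceVector_eq_zero fun v hv ↦ Walk.altVertexWeight_eq_zero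
        fun hvt ↦ ?_, mul_zero]
      rcases List.mem_cons.mp (Walk.edges_cons h t ▸ hclosed e hge v hv hvt) with he' | he'
      exacts [he he', het he']
  have := congrArg (t.altVertexWeight K ⬝ᵥ ·) hg
  simp only [dotProduct_sum, dotProduct_smul, smul_eq_mul, hpair, Finset.sum_ite_eq',
    Finset.mem_univ, if_true, dotProduct_zero] at this
  exact (mul_eq_zero.mp this).resolve_left two_ne_zero

theorem CactusLike.eq_zero_of_sum_smul_incidenceVector_eq_zero [CharZero K] {H : SimpleGraph V}
    (hH : CactusLike H) (hgH : ∀ e ∉ H.edgeSet, g e = 0)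
    (hg : ∑ e, g e • e.incidenceVector K = 0) : g = 0 := by
  by_contra hne
  obtain ⟨e₀, he₀⟩ := Function.ne_iff.mp hne
  have hsupp : ∀ e, g e ≠ 0 → e ∈ H.edgeSet := fun e h ↦ by_contra fun he ↦ h (hgH e he)
  let S := fromEdgeSet {e | g e ≠ 0}
  have hS : ∀ a b, S.Adj a b ↔ g s(a, b) ≠ 0 := fun a b ↦
    ⟨fun h ↦ h.1, fun h ↦ ⟨h, (hsupp _ h : H.Adj a b).ne⟩⟩
  have hSH : S ≤ H := fun a b h ↦ hsupp _ ((hS a b).mp h)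
  have hdeg : ∀ v y, S.Adj v y → ∃ z, S.Adj v z ∧ z ≠ y := fun v y h ↦ by
    obtain ⟨e, hne, hve, hge⟩ := exists_ne_mem_of_sum_smul_incidenceVector_eq_zero hg
      (Sym2.mem_mk_left v y) ((hS v y).mp h)
    obtain ⟨z, rfl⟩ := Sym2.mem_iff_exists.mp hve
    exact ⟨z, (hS v z).mpr hge, fun hzy ↦ hne (hzy ▸ rfl)⟩
  obtain ⟨a, b⟩ := e₀
  obtain ⟨c, d, hd⟩ := exists_isCycle_of_adj hdeg ((hS a b).mpr he₀)
  cases d with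
  | nil => exact hd.ne_nil rfl
  | @cons _ x _ hcx t =>
    refine (hS c x).mp hcx (apply_eq_zero_of_isCycle_of_odd hg hd ((hH.anti hSH).1 c _ hd) ?_)
    intro e hge v hve hvt
    obtain ⟨y, rfl⟩ := Sym2.mem_iff_exists.mp hve
    exact IsPseudoforest.mem_edges_of_isCycle (hH.anti hSH).2 hdeg hd
      (List.mem_cons_of_mem _ hvt) ((hS v y).mpr hge)

theorem odd_length_of_linearIndepOn (hli : LinearIndepOn K (Sym2.incidenceVector K) G.edgeSet)
    {u : V} {c : G.Walk u u} (hc : c.IsCycle) : Odd c.length := by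
  by_contra heven
  have hzero := linearIndepOn_iff_of_fintype.mp hli (c.altEdgeWeight K)
    (fun e he ↦ Walk.altEdgeWeight_eq_zero fun h ↦ he (c.edges_subset_edgeSet h))
    (by rw [Walk.sum_altEdgeWeight_smul_incidenceVector,
      (Nat.not_odd_iff_even.mp heven).neg_one_pow, one_smul, sub_self])
  cases c with
  | nil => exact hc.ne_nil rfl
  | @cons _ x _ h t =>
    have := congrFun hzero s(u, x)
    rcases hc.isTrail.altEdgeWeight_eq_one_or_eq_neg_one (K := K) (e := s(u, x)) (by simp)
      with h1 | h1 <;>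
      simp_all

theorem mem_edges_of_linearIndepOn [CharZero K]
    (hli : LinearIndepOn K (Sym2.incidenceVector K) G.edgeSet)
    (hodd : ∀ (v : V) (c : G.Walk v v), c.IsCycle → Odd c.length) {u v : V} {c : G.Walk u u}
    {d : G.Walk v v} (hc : c.IsCycle) (hd : d.IsCycle) (huv : G.Reachable u v) {e : Sym2 V}
    (he : e ∈ c.edges) : e ∈ d.edges := by
  by_contra hed
  obtain ⟨p, hp⟩ := huv.exists_isPath
  -- Each odd cycle contributes twice its base point, and the path `p` joins the base points with
  -- the sign that makes them cancel.
  have hzero := linearIndepOn_iff_of_fintype.mp hli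
    ((2 : K) • p.altEdgeWeight K - c.altEdgeWeight K + (-1 : K) ^ p.length • d.altEdgeWeight K)
    (fun e he ↦ by
      simp [Walk.altEdgeWeight_eq_zero fun h ↦ he (Walk.edges_subset_edgeSet _ h)])
    (by
      simp only [← Fintype.linearCombination_apply, map_add, map_sub, map_smul]
      simp only [Fintype.linearCombination_apply, Walk.sum_altEdgeWeight_smul_incidenceVector,
        (hodd u c hc).neg_one_pow, (hodd v d hd).neg_one_pow]
      module)
  have := congrFun hzero e
  have hp' : p.altEdgeWeight K e = 0 ∨ p.altEdgeWeight K e = 1 ∨ p.altEdgeWeight K e = -1 := by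
    by_cases hep : e ∈ p.edges
    · exact .inr (hp.isTrail.altEdgeWeight_eq_one_or_eq_neg_one hep)
    · exact .inl (Walk.altEdgeWeight_eq_zero hep)
  simp only [Pi.add_apply, Pi.sub_apply, Pi.smul_apply, Walk.altEdgeWeight_eq_zero hed,
    smul_zero, add_zero, Pi.zero_apply] at this
  rcases hc.isTrail.altEdgeWeight_eq_one_or_eq_neg_one (K := K) he with hc' | hc' <;>
    rcases hp' with hp' | hp' | hp' <;> rw [hc', hp'] at this <;> norm_num at this

theorem linearIndepOn_incidenceVector_edgeSet_iff [CharZero K] (H : SimpleGraph V) :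
    LinearIndepOn K (Sym2.incidenceVector K) H.edgeSet ↔ CactusLike H := by
  refine ⟨fun hli ↦ ?_, fun hH ↦ linearIndepOn_iff_of_fintype.mpr fun g hgH hg ↦
    hH.eq_zero_of_sum_smul_incidenceVector_eq_zero hgH hg⟩
  have hodd (v : V) (c : H.Walk v v) (hc : c.IsCycle) := odd_length_of_linearIndepOn hli hc
  exact ⟨hodd, fun u v c d hc hd huv e ↦ ⟨mem_edges_of_linearIndepOn hli hodd hc hd huv,
    mem_edges_of_linearIndepOn hli hodd hd hc huv.symm⟩⟩

end IncidenceRelations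

theorem edgeVectors_eq_image {n : ℕ} (H : SimpleGraph (Fin n)) :
    edgeVectors H = Sym2.incidenceVector ℝ '' H.edgeSet := by
  ext x
  constructor
  · rintro ⟨i, j, hij, rfl⟩
    exact ⟨s(i, j), hij, Sym2.incidenceVector_mk hij.ne⟩
  · rintro ⟨⟨i, j⟩, hij, rfl⟩
    exact ⟨i, j, hij, Sym2.incidenceVector_mk hij.ne⟩

theorem edgePolytope_simplex_iff_general {n : ℕ} (H : SimpleGraph (Fin n)) :
    AffineIndependent ℝ ((↑) : edgeVectors H → (Fin n → ℝ)) ↔ CactusLike H := by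
  have hsum (x : edgeVectors H) : (∑ i, LinearMap.proj i : (Fin n → ℝ) →ₗ[ℝ] ℝ) x = 2 := by
    obtain ⟨_, i, j, hij, rfl⟩ := x
    norm_num [Finset.sum_add_distrib]
  rw [affineIndependent_iff_linearIndependent_of_forall_apply_eq _ two_ne_zero hsum,
    linearIndependent_subtype_iff, edgeVectors_eq_image,
    ← linearIndepOn_iff_image Sym2.incidenceVector_injective.injOn,
    linearIndepOn_incidenceVector_edgeSet_iff]

/-- For a graph `H` with no isolated vertices, the edge polytope `P(H)` is a simplex
(i.e. its vertices `e i + e j`, over the edges of `H`, are affinely independent) if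
and only if every cycle of `H` is odd and every connected component of `H` contains
at most one cycle. -/
theorem edgePolytope_simplex_iff {n : ℕ} (H : SimpleGraph (Fin n))
    (hiso : ∀ v : Fin n, ∃ w : Fin n, H.Adj v w) :
    AffineIndependent ℝ ((↑) : edgeVectors H → (Fin n → ℝ)) ↔ CactusLike H :=
  edgePolytope_simplex_iff_general H
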